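/- For a coadjoint orbit: let G be a group with coadjoint action Coad on 𝔤*, H ≤ G a subgroup, i*: 𝔤* → 𝔥* the restriction map, w ∈ 𝔤* with v = i*w, and suppose w + H⁰ ⊆ Coad(H)w where H⁰ = ker i*. Then i*(Coad(G)w) ⊇ Coad_H(H)v, and every element u ∈ 𝔤* with i*u ∈ Coad_H(H)v can be written as u = Coad(k)(w + u⁰) for some k ∈ H and u⁰ ∈ H⁰; consequently (i*)⁻¹(Coad_H(H)v) = Coad(H)(w + H⁰) = Coad(H)w. -/
import Mathlib


/-- Coadjoint orbit version: under the orbit condition w + H⁰ ⊆ Coad(H)w, the fibre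
of the Coad_H-orbit of v = i*w equals the Coad(H)-orbit of w. -/
theorem coadjoint_orbit_induction {G gd hd : Type*} [Group G]
    [AddCommGroup gd] [Module ℝ gd] [AddCommGroup hd] [Module ℝ hd]
    (Coad : G →* gd ≃ₗ[ℝ] gd) (H : Subgroup G)
    (CoadH : H →* hd ≃ₗ[ℝ] hd) (istar : gd →ₗ[ℝ] hd)
    (hequiv : ∀ (h : H) (μ : gd), istar (Coad (h : G) μ) = CoadH h (istar μ))
    (w : gd) (v : hd) (hv : istar w = v)
    (horbit : ∀ n ∈ LinearMap.ker istar, ∃ h : H, Coad (h : G) w = w + n) :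
    ({ν : hd | ∃ h : H, CoadH h v = ν} ⊆
      (istar : gd → hd) '' {u : gd | ∃ k : G, Coad k w = u}) ∧
    (∀ u : gd, (∃ h : H, CoadH h v = istar u) →
      ∃ (k : H) (n : gd), n ∈ LinearMap.ker istar ∧ u = Coad (k : G) (w + n)) ∧
    ({u : gd | ∃ h : H, CoadH h v = istar u} = {u : gd | ∃ h : H, Coad (h : G) w = u})
    := by
  have hinv : ∀ (h : H) (u : gd), Coad (h : G) (Coad ((h⁻¹ : H) : G) u) = u := by
    intro h u
    have : (Coad (h : G) * Coad ((h⁻¹ : H) : G)) u = u := by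
      rw [← map_mul, ← Subgroup.coe_mul, mul_inv_cancel, Subgroup.coe_one, map_one]
      rfl
    exact this
  have key : ∀ u : gd, (∃ h : H, CoadH h v = istar u) →
      ∃ (k : H) (n : gd), n ∈ LinearMap.ker istar ∧ u = Coad (k : G) (w + n) := by
    rintro u ⟨h, hh⟩
    refine ⟨h, Coad ((h⁻¹ : H) : G) u - w, ?_, ?_⟩
    · have h1 : istar (Coad ((h⁻¹ : H) : G) u) = CoadH h⁻¹ (istar u) := hequiv h⁻¹ u
      have h2 : CoadH h⁻¹ (istar u) = v := by
        have : (CoadH h⁻¹ * CoadH h) v = v := by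
          rw [← map_mul, inv_mul_cancel, map_one]; rfl
        rw [← hh]; exact this
      rw [LinearMap.mem_ker, map_sub, h1, h2, hv, sub_self]
    · rw [add_sub_cancel, hinv]
  refine ⟨?_, key, ?_⟩
  · rintro ν ⟨h, hh⟩
    refine ⟨Coad (h : G) w, ⟨(h : G), rfl⟩, ?_⟩
    rw [hequiv, hv, hh]
  · ext u
    constructor
    · intro hu
      obtain ⟨k, n, hn, hkn⟩ := key u hu
      obtain ⟨h', hh'⟩ := horbit n hn
      refine ⟨k * h', ?_⟩
      rw [Subgroup.coe_mul, map_mul]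
      show Coad (k : G) (Coad (h' : G) w) = u
      rw [hh', ← hkn]
    · rintro ⟨h, hh⟩
      exact ⟨h, by rw [← hh, hequiv, hv]⟩
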